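/- arXiv:2005.00207 — 3 statements merged into one kernel-verified Lean document; each statement's English description precedes it below -/
import Mathlib

section
/- Let $n \geq 1$ and let $\{[a_i, b_i]^{T}\}_{i=1}^{n}$ be unit column vectors in $\mathbb{C}^2$. Let $V = \bigotimes_{i=1}^{n} [a_i, b_i]^{T} = [v_1, v_2, \dots, v_{2^n}]^{T}$ be their Kronecker product. Then for every $k$ with $1 \leq k \leq 2^{n-1}$, one has $|v_k| \cdot |v_{2^n - k + 1}| = \prod_{i=1}^{n} |a_i| |b_i|$. -/
open Matrix

noncomputable section

/-- The Kronecker product of the `n` two-dimensional vectors `u 0, …, u (n-1)`,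
with the convention `[a₁,b₁]ᵀ ⊗ [a₂,b₂]ᵀ = [a₁a₂, b₁a₂, a₁b₂, b₁b₂]ᵀ`
(the first factor varies fastest).  With 0-indexing, entry `k` of the product is
`∏ i, cᵢ` where `cᵢ = aᵢ` if bit `i` of `k` is `0` and `cᵢ = bᵢ` otherwise. -/
def kronVec {n : ℕ} (u : Fin n → Fin 2 → ℂ) : Fin (2 ^ n) → ℂ :=
  fun k => ∏ i : Fin n, u i (if Nat.testBit k.val i.val then 1 else 0)

/-- The index `2^n - k + 1` in 1-indexed terms, i.e. `2^n - 1 - k` in 0-indexed terms. -/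
def revIdx {n : ℕ} (k : Fin (2 ^ n)) : Fin (2 ^ n) :=
  ⟨2 ^ n - 1 - (k : ℕ), by have := Nat.two_pow_pos n; omega⟩

/-! Reversing the index complements its `n` low bits, so entries `k` and `2^n - 1 - k` of the
Kronecker product pick, from every factor, one coordinate each, and together both of them. -/

theorem testBit_revIdx {n : ℕ} (k : Fin (2 ^ n)) (i : Fin n) :
    Nat.testBit (revIdx k) i = !Nat.testBit k i := by
  have hsub : (revIdx k : ℕ) = 2 ^ n - ((k : ℕ) + 1) := by
    simp only [revIdx]
    omega
  rw [hsub, Nat.testBit_two_pow_sub_succ k.isLt]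
  simp [i.isLt]

theorem kronVec_mul_kronVec_revIdx {n : ℕ} (u : Fin n → Fin 2 → ℂ) (k : Fin (2 ^ n)) :
    kronVec u k * kronVec u (revIdx k) = ∏ i : Fin n, u i 0 * u i 1 := by
  simp only [kronVec, ← Finset.prod_mul_distrib, testBit_revIdx]
  refine Finset.prod_congr rfl fun i _ => ?_
  cases Nat.testBit k i <;> simp [mul_comm]

theorem stmt7_general (n : ℕ) (u : Fin n → Fin 2 → ℂ)
    (k : Fin (2 ^ n)) :
    ‖kronVec u k‖ * ‖kronVec u (revIdx k)‖
      = ∏ i : Fin n, ‖u i 0‖ * ‖u i 1‖ := by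
  simp only [← norm_mul, kronVec_mul_kronVec_revIdx, norm_prod]

theorem stmt7 (n : ℕ) (hn : 1 ≤ n) (u : Fin n → Fin 2 → ℂ)
    (hu : ∀ i, ‖u i 0‖ ^ 2 + ‖u i 1‖ ^ 2 = 1)
    (k : Fin (2 ^ n)) (hk : (k : ℕ) < 2 ^ (n - 1)) :
    ‖kronVec u k‖ * ‖kronVec u (revIdx k)‖
      = ∏ i : Fin n, ‖u i 0‖ * ‖u i 1‖ :=
  stmt7_general n u k
end
end

section
/- Let $n \geq 5$ and let $\{[a_i, b_i]^{T}\}_{i=1}^{n}$ be unit column vectors in $\mathbb{C}^2$, with Kronecker product $W = \bigotimes_{i=1}^{n} [a_i, b_i]^{T} \in \mathbb{C}^{2^n}$. Then $|\langle W | d_n | W \rangle| = |W^{\dagger} d_n W|$ lies in the interval $[2^{-n}(1 - 2n^{-1}),\; 2^{-n}(1 + 2n^{-1})]$. -/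
open Matrix

noncomputable section

/-- The `2^n × 2^n` matrix `d_n` (0-indexed): entries `2⁻ⁿ` on the diagonal, and `2⁻ⁿ` at the
`⌊2^n/n⌋` extreme positions on each end of the anti-diagonal; all other entries are `0`. -/
def dmat (n : ℕ) : Matrix (Fin (2 ^ n)) (Fin (2 ^ n)) ℂ :=
  Matrix.of fun i j =>
    if (j : ℕ) = (i : ℕ) ∨
        ((((i : ℕ) < 2 ^ n / n) ∨ (2 ^ n - 2 ^ n / n ≤ (i : ℕ))) ∧ (j : ℕ) = 2 ^ n - 1 - (i : ℕ))
    then ((2 : ℂ) ^ n)⁻¹ else 0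

/-!
Write `W = ⊗ᵢ [aᵢ, bᵢ]ᵀ` and `c = 2⁻ⁿ`. Since `dₙ` is `c` on the diagonal and on part of the
anti-diagonal, `W† dₙ W = c (‖W‖² + T)` with `T = ∑ conj(W_k) W_{rev k}` over the at most
`2 ⌊2ⁿ/n⌋` rows `k` that carry an anti-diagonal entry. Here `‖W‖² = ∏ (|aᵢ|² + |bᵢ|²) = 1`, and
reversing an index complements all its bits, so `|W_k| |W_{rev k}| = ∏ |aᵢ| |bᵢ| ≤ 2⁻ⁿ` by AM-GM.
Hence `|T| ≤ 2 ⌊2ⁿ/n⌋ 2⁻ⁿ ≤ 2/n`.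
-/

section QuadraticForm

variable {𝕜 ι : Type*} [RCLike 𝕜] [Fintype ι] [DecidableEq ι]

lemma sum_ite_eq_or_and_eq_mul (c : 𝕜) (W : ι → 𝕜) (i s : ι) (q : Prop) [Decidable q] :
    ∑ j, (if j = i ∨ (q ∧ j = s) then c else 0) * W j =
      c * (W i + if q ∧ s ≠ i then W s else 0) := by
  have hsplit : ∀ j, (if j = i ∨ (q ∧ j = s) then c else 0) * W j =
      (if j = i then c * W j else 0) + if q ∧ s ≠ i then (if j = s then c * W j else 0) else 0 := by
    intro j
    by_cases hji : j = i <;> by_cases hjs : j = s <;> by_cases hq : q <;> simp_all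
  simp only [hsplit, Finset.sum_add_distrib, Finset.sum_ite_eq', Finset.mem_univ, if_true]
  split_ifs <;> simp [Finset.sum_ite_eq', mul_add]

lemma norm_star_dotProduct_mulVec_sub_le (D : Matrix ι ι 𝕜) (c : 𝕜) (s : Finset ι)
    (σ : ι → ι) (hD : ∀ i j, D i j = if j = i ∨ (i ∈ s ∧ j = σ i) then c else 0) (W : ι → 𝕜) :
    ‖star W ⬝ᵥ D *ᵥ W - c * ∑ i, (‖W i‖ ^ 2 : ℝ)‖ ≤ ‖c‖ * ∑ i ∈ s, ‖W i‖ * ‖W (σ i)‖ := by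
  have hform : star W ⬝ᵥ D *ᵥ W - c * ∑ i, (‖W i‖ ^ 2 : ℝ) =
      c * ∑ i, if i ∈ s ∧ σ i ≠ i then star (W i) * W (σ i) else 0 := by
    simp only [dotProduct, mulVec, hD, sum_ite_eq_or_and_eq_mul, Pi.star_apply, RCLike.ofReal_sum,
      RCLike.ofReal_pow, ← RCLike.conj_mul, RCLike.star_def, mul_add, Finset.mul_sum,
      Finset.sum_add_distrib, mul_ite, mul_zero]
    rw [add_sub_right_comm, ← Finset.sum_sub_distrib, Finset.sum_eq_zero fun i _ => by ring,
      zero_add]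
    exact Finset.sum_congr rfl fun i _ => by split_ifs <;> ring
  rw [hform, norm_mul]
  gcongr
  calc ‖∑ i, if i ∈ s ∧ σ i ≠ i then star (W i) * W (σ i) else 0‖
      ≤ ∑ i, ‖if i ∈ s ∧ σ i ≠ i then star (W i) * W (σ i) else 0‖ := norm_sum_le _ _
    _ ≤ ∑ i, if i ∈ s then ‖W i‖ * ‖W (σ i)‖ else 0 := by
        gcongr with i
        split_ifs with h h'
        · rw [norm_mul, norm_star]
        · exact absurd h.1 h'
        · rw [norm_zero]; positivity
        · rw [norm_zero]
    _ = ∑ i ∈ s, ‖W i‖ * ‖W (σ i)‖ := by rw [Finset.sum_ite_mem, Finset.univ_inter]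

end QuadraticForm

section KroneckerVector

lemma sum_prod_testBit_eq_prod_add {β : Type*} [CommSemiring β] {n : ℕ} (f : Fin n → Fin 2 → β) :
    ∑ k : Fin (2 ^ n), ∏ i : Fin n, f i (if Nat.testBit k i then 1 else 0) =
      ∏ i : Fin n, (f i 0 + f i 1) := by
  have hbit : ∀ (k : Fin (2 ^ n)) (i : Fin n),
      (if Nat.testBit k i then 1 else 0 : Fin 2) = finFunctionFinEquiv.symm k i := by
    intro k i
    ext
    rw [finFunctionFinEquiv_symm_apply_val, Nat.testBit_eq_decide_div_mod_eq]
    rcases Nat.mod_two_eq_zero_or_one (k / 2 ^ (i : ℕ)) with h | h <;> simp [h]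
  simp_rw [hbit]
  rw [Equiv.sum_comp finFunctionFinEquiv.symm (fun g => ∏ i, f i (g i)), ← Fintype.prod_sum]
  simp [Fin.sum_univ_two]

variable {n : ℕ} (u : Fin n → Fin 2 → ℂ)

lemma sum_norm_kronVec_sq :
    ∑ k, ‖kronVec u k‖ ^ 2 = ∏ i, (‖u i 0‖ ^ 2 + ‖u i 1‖ ^ 2) := by
  simp only [kronVec, norm_prod, ← Finset.prod_pow]
  exact sum_prod_testBit_eq_prod_add fun i b => ‖u i b‖ ^ 2

lemma testBit_rev (k : Fin (2 ^ n)) (i : Fin n) :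
    Nat.testBit k.rev i = !Nat.testBit k i := by
  rw [Fin.val_rev, Nat.testBit_two_pow_sub_succ k.isLt, decide_eq_true i.isLt, Bool.true_and]

lemma norm_kronVec_mul_norm_kronVec_rev (k : Fin (2 ^ n)) :
    ‖kronVec u k‖ * ‖kronVec u k.rev‖ = ∏ i, ‖u i 0‖ * ‖u i 1‖ := by
  simp only [kronVec, norm_prod, ← Finset.prod_mul_distrib, testBit_rev]
  refine Finset.prod_congr rfl fun i _ => ?_
  cases Nat.testBit k i <;> simp [mul_comm]

lemma prod_norm_mul_norm_le_inv_two_pow (hu : ∀ i, ‖u i 0‖ ^ 2 + ‖u i 1‖ ^ 2 = 1) :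
    ∏ i, ‖u i 0‖ * ‖u i 1‖ ≤ ((2 : ℝ) ^ n)⁻¹ := by
  calc ∏ i, ‖u i 0‖ * ‖u i 1‖ ≤ ∏ _i : Fin n, (2 : ℝ)⁻¹ := by
        gcongr with i
        nlinarith [hu i, sq_nonneg (‖u i 0‖ - ‖u i 1‖)]
    _ = ((2 : ℝ) ^ n)⁻¹ := by simp

end KroneckerVector

section AntiDiagonal

def antiDiagRows (n : ℕ) : Finset (Fin (2 ^ n)) :=
  Finset.univ.filter fun i => (i : ℕ) < 2 ^ n / n ∨ 2 ^ n - 2 ^ n / n ≤ (i : ℕ)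

lemma dmat_apply (n : ℕ) (i j : Fin (2 ^ n)) :
    dmat n i j = if j = i ∨ (i ∈ antiDiagRows n ∧ j = i.rev) then ((2 : ℂ) ^ n)⁻¹ else 0 := by
  have hrev : (j : ℕ) = 2 ^ n - 1 - i ↔ j = i.rev := by
    rw [Fin.ext_iff, Fin.val_rev]; omega
  simp [dmat, antiDiagRows, Fin.ext_iff, hrev]

lemma card_antiDiagRows_le (n : ℕ) : (antiDiagRows n).card ≤ 2 * (2 ^ n / n) := by
  rw [antiDiagRows, Finset.filter_or]
  set r := 2 ^ n / n
  have hlow : (Finset.univ.filter fun i : Fin (2 ^ n) => (i : ℕ) < r).card ≤ r := by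
    rw [Fin.card_filter_val_lt]; exact min_le_right _ _
  have hhigh : (Finset.univ.filter fun i : Fin (2 ^ n) => 2 ^ n - r ≤ (i : ℕ)).card ≤ r := by
    refine le_trans (Finset.card_le_card_of_injOn Fin.rev (fun i hi => ?_) Fin.rev_injective.injOn)
      hlow
    simp only [Finset.mem_coe, Finset.mem_filter, Finset.mem_univ, true_and, Fin.val_rev] at hi ⊢
    omega
  exact (Finset.card_union_le _ _).trans (by omega)

lemma card_antiDiagRows_mul_inv_two_pow_le (n : ℕ) :
    ((antiDiagRows n).card : ℝ) * ((2 : ℝ) ^ n)⁻¹ ≤ 2 * (n : ℝ)⁻¹ := by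
  have hr : ((2 ^ n / n : ℕ) : ℝ) ≤ (2 : ℝ) ^ n / n := by
    simpa using Nat.cast_div_le (α := ℝ) (m := 2 ^ n) (n := n)
  calc ((antiDiagRows n).card : ℝ) * ((2 : ℝ) ^ n)⁻¹
      ≤ (2 * ((2 : ℝ) ^ n / n)) * ((2 : ℝ) ^ n)⁻¹ := by
        gcongr
        exact (Nat.cast_le.2 (card_antiDiagRows_le n)).trans (by push_cast; gcongr)
    _ = 2 * (n : ℝ)⁻¹ := by field_simp

end AntiDiagonal

theorem stmt9_general (n : ℕ) (u : Fin n → Fin 2 → ℂ)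
    (hu : ∀ i, ‖u i 0‖ ^ 2 + ‖u i 1‖ ^ 2 = 1) :
    ‖star (kronVec u) ⬝ᵥ (dmat n).mulVec (kronVec u)‖ ∈
      Set.Icc (((2 : ℝ) ^ n)⁻¹ * (1 - 2 * (n : ℝ)⁻¹)) (((2 : ℝ) ^ n)⁻¹ * (1 + 2 * (n : ℝ)⁻¹)) := by
  set W := kronVec u
  have hunit : ∑ k, ‖W k‖ ^ 2 = 1 := by simp [W, sum_norm_kronVec_sq, hu]
  have hcross : ∑ k ∈ antiDiagRows n, ‖W k‖ * ‖W k.rev‖ ≤ 2 * (n : ℝ)⁻¹ := by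
    rw [Finset.sum_congr rfl fun k _ => norm_kronVec_mul_norm_kronVec_rev u k, Finset.sum_const,
      nsmul_eq_mul]
    exact (mul_le_mul_of_nonneg_left (prod_norm_mul_norm_le_inv_two_pow u hu) (by positivity)).trans
      (card_antiDiagRows_mul_inv_two_pow_le n)
  have hclose := norm_star_dotProduct_mulVec_sub_le (dmat n) _ _ _ (dmat_apply n) W
  rw [hunit, RCLike.ofReal_one, mul_one, norm_inv, norm_pow, RCLike.norm_two] at hclose
  have hdev : |‖star W ⬝ᵥ dmat n *ᵥ W‖ - ((2 : ℝ) ^ n)⁻¹| ≤ ((2 : ℝ) ^ n)⁻¹ * (2 * (n : ℝ)⁻¹) :=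
    calc |‖star W ⬝ᵥ dmat n *ᵥ W‖ - ((2 : ℝ) ^ n)⁻¹|
        = |‖star W ⬝ᵥ dmat n *ᵥ W‖ - ‖((2 : ℂ) ^ n)⁻¹‖| := by simp
      _ ≤ ‖star W ⬝ᵥ dmat n *ᵥ W - ((2 : ℂ) ^ n)⁻¹‖ := abs_norm_sub_norm_le _ _
      _ ≤ ((2 : ℝ) ^ n)⁻¹ * (2 * (n : ℝ)⁻¹) := hclose.trans (by gcongr)
  rw [abs_sub_le_iff] at hdev
  constructor <;> linarith [hdev.1, hdev.2]

theorem stmt9 (n : ℕ) (hn : 5 ≤ n) (u : Fin n → Fin 2 → ℂ)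
    (hu : ∀ i, ‖u i 0‖ ^ 2 + ‖u i 1‖ ^ 2 = 1) :
    ‖star (kronVec u) ⬝ᵥ (dmat n).mulVec (kronVec u)‖ ∈
      Set.Icc (((2 : ℝ) ^ n)⁻¹ * (1 - 2 * (n : ℝ)⁻¹)) (((2 : ℝ) ^ n)⁻¹ * (1 + 2 * (n : ℝ)⁻¹)) :=
  stmt9_general n u hu
end
end

section
/- Let $(r_i)_{i \geq 5}$ and $(\delta_i)_{i \geq 5}$ be sequences of real numbers such that for every $i \geq 5$: $r_i \in [2^{-i}(1 - 2 i^{-1}),\; 2^{-i}(1 + 2 i^{-1})]$ and $|\delta_i| \leq 2^{-i+1} i^{-1}$. Suppose there exist $\alpha > 0$ and $\epsilon > 0$ such that for all $n \geq 5$: $\prod_{i=5}^{n} r_i \geq \alpha \prod_{i=5}^{n} (r_i + \delta_i)$ and $\prod_{i=5}^{n} r_i \geq \epsilon \prod_{i=5}^{n} (r_i - \delta_i)$. Then there exists $G > 0$ such that for all $n \geq 5$, $\prod_{i=5}^{n} (r_i + \delta_i) \geq G \prod_{i=5}^{n} r_i$. -/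
/-!
Write `P`, `P₊`, `P₋` for the three products. The bounds on `r i` and `δ i` give
`|δ i| ≤ 2 r i / (i - 2)`, hence `(r i + δ i) (r i - δ i) = r i ^ 2 - δ i ^ 2 ≥ (1 - 4 / (i - 2) ^ 2) r i ^ 2`.
The product of `1 - 4 / k ^ 2 = (k - 2) (k + 2) / k ^ 2` over `k = 3, …, n - 2` telescopes to
`(n - 1) n / (6 (n - 3) (n - 2)) ≥ 1 / 6`, so `P₊ P₋ ≥ P ^ 2 / 6`. Together with `ε P₋ ≤ P` this
gives `P₊ ≥ (ε / 6) P`.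
-/

open Finset

lemma abs_mul_sub_two_le {x c r δ : ℝ} (hx : 2 < x)
    (hr : c * (1 - 2 * x⁻¹) ≤ r) (hδ : |δ| ≤ 2 * c * x⁻¹) :
    |δ| * (x - 2) ≤ 2 * r := by
  have hc : c * (1 - 2 * x⁻¹) = c * x⁻¹ * (x - 2) := by field_simp
  calc |δ| * (x - 2) ≤ 2 * c * x⁻¹ * (x - 2) := by gcongr
    _ ≤ 2 * r := by linarith

section
variable {k r δ : ℝ}

lemma nonneg_of_abs_mul_le (hk : 0 ≤ k) (h : |δ| * k ≤ 2 * r) : 0 ≤ r := by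
  nlinarith [abs_nonneg δ]

lemma abs_le_of_abs_mul_le (hk : 2 ≤ k) (h : |δ| * k ≤ 2 * r) : |δ| ≤ r := by
  nlinarith [abs_nonneg δ]

lemma one_sub_four_div_sq_nonneg (hk : 2 ≤ k) : 0 ≤ 1 - 4 / k ^ 2 := by
  rw [sub_nonneg, div_le_one (by positivity)]
  nlinarith

lemma one_sub_four_div_sq_mul_sq_le (hk : 0 < k) (h : |δ| * k ≤ 2 * r) :
    (1 - 4 / k ^ 2) * r ^ 2 ≤ (r + δ) * (r - δ) := by
  have hδ : |δ| ≤ 2 * r / k := by rwa [le_div_iff₀ hk]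
  have hsq : δ ^ 2 ≤ (2 * r / k) ^ 2 := by
    rw [← sq_abs]
    exact pow_le_pow_left₀ (abs_nonneg δ) hδ 2
  calc (1 - 4 / k ^ 2) * r ^ 2 = r ^ 2 - (2 * r / k) ^ 2 := by field_simp; ring
    _ ≤ r ^ 2 - δ ^ 2 := by linarith
    _ = (r + δ) * (r - δ) := by ring

end

lemma prod_one_sub_four_div_sq_mul_sq_le {ι : Type*} (s : Finset ι) (k r δ : ι → ℝ)
    (hk : ∀ i ∈ s, 2 ≤ k i) (h : ∀ i ∈ s, |δ i| * k i ≤ 2 * r i) :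
    (∏ i ∈ s, (1 - 4 / k i ^ 2)) * (∏ i ∈ s, r i) ^ 2 ≤
      (∏ i ∈ s, (r i + δ i)) * ∏ i ∈ s, (r i - δ i) := by
  rw [← prod_pow, ← prod_mul_distrib, ← prod_mul_distrib]
  refine prod_le_prod (fun i hi => ?_) (fun i hi => ?_)
  · exact mul_nonneg (one_sub_four_div_sq_nonneg (hk i hi)) (sq_nonneg _)
  · exact one_sub_four_div_sq_mul_sq_le (by linarith [hk i hi]) (h i hi)

lemma prod_Icc_one_sub_four_div_sq {n : ℕ} (hn : 5 ≤ n) :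
    ∏ i ∈ Icc 5 n, (1 - 4 / ((i : ℝ) - 2) ^ 2) =
      ((n : ℝ) - 1) * n / (6 * ((n : ℝ) - 3) * ((n : ℝ) - 2)) := by
  induction n, hn using Nat.le_induction with
  | base => norm_num
  | succ n hn ih =>
    rw [prod_Icc_succ_top (by omega), ih]
    have hn5 : (5 : ℝ) ≤ n := by exact_mod_cast hn
    have h3 : (n : ℝ) - 3 ≠ 0 := by linarith
    have h2 : (n : ℝ) - 2 ≠ 0 := by linarith
    have h1 : (n : ℝ) - 1 ≠ 0 := by linarith
    have h1' : (n : ℝ) + 1 - 2 ≠ 0 := by linarith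
    have h2' : (n : ℝ) + 1 - 3 ≠ 0 := by linarith
    push_cast
    field_simp
    ring

lemma one_sixth_le_prod_Icc_one_sub_four_div_sq {n : ℕ} (hn : 5 ≤ n) :
    1 / 6 ≤ ∏ i ∈ Icc 5 n, (1 - 4 / ((i : ℝ) - 2) ^ 2) := by
  rw [prod_Icc_one_sub_four_div_sq hn]
  have hn5 : (5 : ℝ) ≤ n := by exact_mod_cast hn
  rw [div_le_div_iff₀ (by norm_num) (by nlinarith)]
  nlinarith

lemma mul_mul_le_of_mul_sq_le_mul {c ε P Q R : ℝ} (hP : 0 ≤ P) (hQ : 0 ≤ Q) (hε : 0 < ε)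
    (hPQR : c * P ^ 2 ≤ Q * R) (hR : ε * R ≤ P) : ε * c * P ≤ Q := by
  rcases hP.eq_or_lt with rfl | hP
  · simpa using hQ
  have : ε * c * P * P ≤ Q * P := by nlinarith
  exact le_of_mul_le_mul_right this hP

theorem stmt13_general (r δ : ℕ → ℝ)
    (hr : ∀ i : ℕ, 5 ≤ i →
      r i ∈ Set.Icc (((2 : ℝ) ^ i)⁻¹ * (1 - 2 * (i : ℝ)⁻¹)) (((2 : ℝ) ^ i)⁻¹ * (1 + 2 * (i : ℝ)⁻¹)))
    (hδ : ∀ i : ℕ, 5 ≤ i → |δ i| ≤ 2 * ((2 : ℝ) ^ i)⁻¹ * (i : ℝ)⁻¹)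
    (ε : ℝ) (hε : 0 < ε)
    (hprod₂ : ∀ n, 5 ≤ n →
      ε * ∏ i ∈ Finset.Icc 5 n, (r i - δ i) ≤ ∏ i ∈ Finset.Icc 5 n, r i) :
    ∃ G : ℝ, 0 < G ∧ ∀ n, 5 ≤ n →
      G * ∏ i ∈ Finset.Icc 5 n, r i ≤ ∏ i ∈ Finset.Icc 5 n, (r i + δ i) := by
  refine ⟨ε * (1 / 6), by positivity, fun n hn => ?_⟩
  have hk : ∀ i ∈ Icc 5 n, 2 ≤ (i : ℝ) - 2 := fun i hi => by
    have : (5 : ℝ) ≤ i := by exact_mod_cast (mem_Icc.mp hi).1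
    linarith
  have hbound : ∀ i ∈ Icc 5 n, |δ i| * ((i : ℝ) - 2) ≤ 2 * r i := fun i hi =>
    abs_mul_sub_two_le (by linarith [hk i hi]) (hr i (mem_Icc.mp hi).1).1 (hδ i (mem_Icc.mp hi).1)
  have hP : 0 ≤ ∏ i ∈ Icc 5 n, r i := prod_nonneg fun i hi =>
    nonneg_of_abs_mul_le (by linarith [hk i hi]) (hbound i hi)
  have hQ : 0 ≤ ∏ i ∈ Icc 5 n, (r i + δ i) := prod_nonneg fun i hi => by
    linarith [neg_abs_le (δ i), abs_le_of_abs_mul_le (hk i hi) (hbound i hi)]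
  refine mul_mul_le_of_mul_sq_le_mul hP hQ hε ?_ (hprod₂ n hn)
  calc 1 / 6 * (∏ i ∈ Icc 5 n, r i) ^ 2
      ≤ (∏ i ∈ Icc 5 n, (1 - 4 / ((i : ℝ) - 2) ^ 2)) * (∏ i ∈ Icc 5 n, r i) ^ 2 := by
        gcongr; exact one_sixth_le_prod_Icc_one_sub_four_div_sq hn
    _ ≤ _ := prod_one_sub_four_div_sq_mul_sq_le _ _ r δ hk hbound

theorem stmt13 (r δ : ℕ → ℝ)
    (hr : ∀ i : ℕ, 5 ≤ i →
      r i ∈ Set.Icc (((2 : ℝ) ^ i)⁻¹ * (1 - 2 * (i : ℝ)⁻¹)) (((2 : ℝ) ^ i)⁻¹ * (1 + 2 * (i : ℝ)⁻¹)))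
    (hδ : ∀ i : ℕ, 5 ≤ i → |δ i| ≤ 2 * ((2 : ℝ) ^ i)⁻¹ * (i : ℝ)⁻¹)
    (α : ℝ) (hα : 0 < α)
    (hprod₁ : ∀ n, 5 ≤ n →
      α * ∏ i ∈ Finset.Icc 5 n, (r i + δ i) ≤ ∏ i ∈ Finset.Icc 5 n, r i)
    (ε : ℝ) (hε : 0 < ε)
    (hprod₂ : ∀ n, 5 ≤ n →
      ε * ∏ i ∈ Finset.Icc 5 n, (r i - δ i) ≤ ∏ i ∈ Finset.Icc 5 n, r i) :
    ∃ G : ℝ, 0 < G ∧ ∀ n, 5 ≤ n →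
      G * ∏ i ∈ Finset.Icc 5 n, r i ≤ ∏ i ∈ Finset.Icc 5 n, (r i + δ i) :=
  stmt13_general r δ hr hδ ε hε hprod₂
end
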